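/- Let (R,m) be an F-finite reduced Noetherian local ring of prime characteristic p, let e ≥ 1 and q = p^e, and let φ : R → R be an additive map satisfying φ(r^q·x) = r·φ(x) for all r, x ∈ R. Suppose T is an ideal of R such that φ(T) ⊆ T, T ∩ R^o ≠ ∅, and T ⊆ J for every ideal J with φ(J) ⊆ J and J ∩ R^o ≠ ∅ (i.e., T = τ(R,φ)). If T is a principal ideal, then R is weakly F-regular: I* = I for every ideal I of R. -/

import Mathlib

/-!
Write `T = (g)`. As `g ∈ R^o` is a nonzerodivisor of the reduced ring `R` and `φ(gR) ⊆ gR`, the map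
`ψ = g⁻¹ φ (g ·)` is again `p^{-e}`-linear, and `J ↦ gJ` turns `ψ`-compatible ideals into
`φ`-compatible ones; minimality of `(g)` then forces every `ψ`-compatible ideal meeting `R^o` to be
`R`. Applied to `ψ(R) + cR` with `c ∈ R^o ∩ m`, this gives `u` with `ψ u = 1`.
If `c x^{q^k} ∈ I^{[q^k]}` for all `k ≥ N`, the ideal of all such multipliers `c` is
`ψ`-compatible, hence contains `1`; applying `ψ` to `u x^{q^{k+1}}` then descends from
`x^{q^N} ∈ I^{[q^N]}` to `x ∈ I`. If instead `R^o` has no nonunits, prime avoidance puts `m` inside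
a minimal prime, so `R` is a field and tight closure is trivial.
-/

/-- The `q`-th Frobenius power `I^{[q]}` of an ideal `I`: the ideal generated by
the `q`-th powers of the elements of `I`. -/
def frobeniusPower {R : Type*} [CommRing R] (I : Ideal R) (q : ℕ) : Ideal R :=
  Ideal.span ((fun a => a ^ q) '' (I : Set R))

/-- `Rreg c` means `c ∈ R^o`, i.e. `c` avoids every minimal prime of `R`. -/
def Rreg {R : Type*} [CommRing R] (c : R) : Prop :=
  ∀ P ∈ minimalPrimes R, c ∉ P

/-- `x` lies in the tight closure `I*` of `I` (characteristic `p`):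
there is `c ∈ R^o` with `c * x^(p^e) ∈ I^{[p^e]}` for all `e ≫ 0`. -/
def InTightClosure {R : Type*} [CommRing R] (p : ℕ) (I : Ideal R) (x : R) : Prop :=
  ∃ c, Rreg c ∧ ∃ N : ℕ, ∀ e ≥ N, c * x ^ p ^ e ∈ frobeniusPower I (p ^ e)

/-- The tight closure `I*` of `I`, as an ideal: the span of the set of elements in the
tight closure (this set is already an ideal, so taking the span is harmless). -/
def tightClosure {R : Type*} [CommRing R] (p : ℕ) (I : Ideal R) : Ideal R :=
  Ideal.span {x | InTightClosure p I x}

open IsLocalRing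

section

variable {R : Type*} [CommRing R] {q : ℕ}

theorem Rreg.one : Rreg (1 : R) := fun P hP h => hP.1.1.ne_top ((Ideal.eq_top_iff_one P).mpr h)

theorem Rreg.mul {a b : R} (ha : Rreg a) (hb : Rreg b) : Rreg (a * b) := fun P hP hab =>
  (hP.1.1.mem_or_mem hab).elim (ha P hP) (hb P hP)

theorem Rreg.of_dvd {a b : R} (hab : a ∣ b) (hb : Rreg b) : Rreg a := by
  obtain ⟨c, rfl⟩ := hab
  exact fun P hP ha => hb P hP (P.mul_mem_right c ha)

theorem Rreg.isLeftRegular [IsReduced R] {c : R} (hc : Rreg c) : IsLeftRegular c := by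
  refine isLeftRegular_iff_right_eq_zero_of_mul.mpr fun y hy => ?_
  have hy : y ∈ sInf (minimalPrimes R) := Submodule.mem_sInf.mpr fun P hP =>
    (hP.1.1.mem_or_mem (hy ▸ P.zero_mem)).resolve_left (hc P hP)
  rwa [minimalPrimes, Ideal.sInf_minimalPrimes, Ideal.radical_bot_of_isReduced] at hy

theorem frobeniusPower_one (I : Ideal R) : frobeniusPower I 1 = I := by
  simp [frobeniusPower]

theorem pow_mem_frobeniusPower {I : Ideal R} {a : R} (ha : a ∈ I) (q : ℕ) :
    a ^ q ∈ frobeniusPower I q :=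
  Ideal.subset_span ⟨a, ha, rfl⟩

theorem frobeniusPower_le (hq : q ≠ 0) (I : Ideal R) : frobeniusPower I q ≤ I :=
  Ideal.span_le.mpr <| by
    rintro _ ⟨a, ha, rfl⟩
    exact I.pow_mem_of_mem ha q (Nat.pos_of_ne_zero hq)

theorem le_tightClosure (p : ℕ) (I : Ideal R) : I ≤ tightClosure p I := fun x hx =>
  Ideal.subset_span ⟨1, Rreg.one, 0, fun e _ => by
    simpa using pow_mem_frobeniusPower hx (p ^ e)⟩

def rangeIdeal (ψ : R →+ R) (hψ : ∀ r x, ψ (r ^ q * x) = r * ψ x) : Ideal R where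
  carrier := Set.range ψ
  add_mem' := by
    rintro _ _ ⟨a, rfl⟩ ⟨b, rfl⟩
    exact ⟨a + b, map_add ψ a b⟩
  zero_mem' := ⟨0, map_zero ψ⟩
  smul_mem' := by
    rintro r _ ⟨s, rfl⟩
    exact ⟨r ^ q * s, hψ r s⟩

theorem map_mem_frobeniusPower {ψ : R →+ R} (hψ : ∀ r x, ψ (r ^ q * x) = r * ψ x)
    {I : Ideal R} {m : ℕ} {z : R} (hz : z ∈ frobeniusPower I (q * m)) :
    ψ z ∈ frobeniusPower I m := by
  -- `ψ` is not `R`-linear, so induct on a statement stable under multiplication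
  suffices ∀ r, ψ (r * z) ∈ frobeniusPower I m by simpa using this 1
  induction hz using Submodule.span_induction with
  | mem _ h =>
    obtain ⟨a, ha, rfl⟩ := h
    intro r
    dsimp only
    rw [mul_comm, show a ^ (q * m) = (a ^ m) ^ q by ring, hψ]
    exact Ideal.mul_mem_right _ _ (pow_mem_frobeniusPower ha m)
  | zero => simp
  | add _ _ _ _ hx hy => intro r; simpa [mul_add] using add_mem (hx r) (hy r)
  | smul s _ _ hx => intro r; simpa [mul_assoc] using hx (r * s)

theorem map_mul_mem_frobeniusPower {ψ : R →+ R} (hψ : ∀ r x, ψ (r ^ q * x) = r * ψ x)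
    {I : Ideal R} {m : ℕ} {c x : R} (h : c * x ^ q ∈ frobeniusPower I (q * m)) :
    ψ c * x ∈ frobeniusPower I m := by
  rw [mul_comm, ← hψ, mul_comm]
  exact map_mem_frobeniusPower hψ h

theorem pow_mem_frobeniusPower_of_succ {ψ : R →+ R} (hψ : ∀ r x, ψ (r ^ q * x) = r * ψ x)
    {u : R} (hu : ψ u = 1) {I : Ideal R} {x : R} {k : ℕ}
    (h : x ^ q ^ (k + 1) ∈ frobeniusPower I (q ^ (k + 1))) :
    x ^ q ^ k ∈ frobeniusPower I (q ^ k) := by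
  rw [pow_succ', pow_mul'] at h
  simpa [hu] using map_mul_mem_frobeniusPower hψ (Ideal.mul_mem_left _ u h)

theorem mem_of_pow_mem_frobeniusPower {ψ : R →+ R} (hψ : ∀ r x, ψ (r ^ q * x) = r * ψ x)
    {u : R} (hu : ψ u = 1) {I : Ideal R} {x : R} {k : ℕ}
    (h : x ^ q ^ k ∈ frobeniusPower I (q ^ k)) : x ∈ I := by
  induction k with
  | zero => simpa [frobeniusPower_one] using h
  | succ k ih => exact ih (pow_mem_frobeniusPower_of_succ hψ hu h)

def frobeniusColon (I : Ideal R) (x : R) (q N : ℕ) : Ideal R :=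
  ⨅ k ≥ N, (frobeniusPower I (q ^ k)).colon {x ^ q ^ k}

theorem mem_frobeniusColon {I : Ideal R} {x c : R} {N : ℕ} :
    c ∈ frobeniusColon I x q N ↔ ∀ k ≥ N, c * x ^ q ^ k ∈ frobeniusPower I (q ^ k) := by
  simp [frobeniusColon, Submodule.mem_iInf, Submodule.mem_colon_singleton]

theorem map_mem_frobeniusColon {ψ : R →+ R} (hψ : ∀ r x, ψ (r ^ q * x) = r * ψ x)
    {I : Ideal R} {x c : R} {N : ℕ} (hc : c ∈ frobeniusColon I x q N) :
    ψ c ∈ frobeniusColon I x q N := by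
  rw [mem_frobeniusColon] at hc ⊢
  intro k hk
  have h := hc (k + 1) (by omega)
  rw [pow_succ', pow_mul'] at h
  exact map_mul_mem_frobeniusPower hψ h

theorem mem_of_forall_mul_pow_mem {ψ : R →+ R} (hψ : ∀ r x, ψ (r ^ q * x) = r * ψ x)
    (htop : ∀ J : Ideal R, (∀ x ∈ J, ψ x ∈ J) → (∃ c ∈ J, Rreg c) → J = ⊤) {u : R} (hu : ψ u = 1)
    {I : Ideal R} {x c : R} (hc : Rreg c) {N : ℕ}
    (hN : ∀ k ≥ N, c * x ^ q ^ k ∈ frobeniusPower I (q ^ k)) : x ∈ I := by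
  have hcolon : frobeniusColon I x q N = ⊤ :=
    htop _ (fun _ => map_mem_frobeniusColon hψ) ⟨c, mem_frobeniusColon.mpr hN, hc⟩
  have hone := mem_frobeniusColon.mp (hcolon ▸ Submodule.mem_top : (1 : R) ∈ _) N le_rfl
  exact mem_of_pow_mem_frobeniusPower hψ hu (one_mul (x ^ q ^ N) ▸ hone)

theorem exists_mul_map_eq_map_mul {φ : R →+ R} (hφ : ∀ r x, φ (r ^ q * x) = r * φ x) {g : R}
    (hg : IsLeftRegular g) (hgφ : ∀ x, g ∣ φ (g * x)) :
    ∃ ψ : R →+ R, (∀ r x, ψ (r ^ q * x) = r * ψ x) ∧ ∀ x, g * ψ x = φ (g * x) := by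
  choose ψ hψ using hgφ
  let Ψ : R →+ R := AddMonoidHom.mk' ψ fun a b => hg <| show g * _ = g * _ by
    rw [mul_add, ← hψ, ← hψ, ← hψ, mul_add, map_add]
  refine ⟨Ψ, fun r x => hg ?_, fun x => (hψ x).symm⟩
  change g * ψ _ = g * (r * ψ x)
  rw [← hψ, mul_left_comm, hφ, hψ, mul_left_comm]

theorem eq_top_of_map_mem_of_mul_map_eq {φ ψ : R →+ R} {g : R} (hg : IsLeftRegular g)
    (hgreg : Rreg g) (hψ : ∀ x, g * ψ x = φ (g * x))
    (hmin : ∀ J : Ideal R, (∀ x ∈ J, φ x ∈ J) → (∃ c ∈ J, Rreg c) → Ideal.span {g} ≤ J)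
    {J : Ideal R} (hJ : ∀ x ∈ J, ψ x ∈ J) (hJreg : ∃ c ∈ J, Rreg c) : J = ⊤ := by
  obtain ⟨c, hcJ, hc⟩ := hJreg
  have hgJ : Ideal.span {g} ≤ Ideal.span {g} * J := by
    refine hmin _ (fun z hz => ?_) ⟨g * c, Ideal.mul_mem_mul (Ideal.mem_span_singleton_self g) hcJ,
      hgreg.mul hc⟩
    obtain ⟨y, hy, rfl⟩ := Submodule.mem_span_singleton_mul.mp hz
    exact Submodule.mem_span_singleton_mul.mpr ⟨ψ y, hJ y hy, hψ y⟩
  obtain ⟨y, hy, hgy⟩ := Submodule.mem_span_singleton_mul.mp (hgJ (Ideal.mem_span_singleton_self g))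
  rw [Ideal.eq_top_iff_one, ← hg (hgy.trans (mul_one g).symm)]
  exact hy

theorem exists_forall_eq_top_of_span_singleton [IsReduced R] {φ : R →+ R}
    (hφ : ∀ r x, φ (r ^ q * x) = r * φ x) {g : R}
    (hcomp : ∀ x ∈ Ideal.span {g}, φ x ∈ Ideal.span {g}) (hreg : ∃ c ∈ Ideal.span {g}, Rreg c)
    (hmin : ∀ J : Ideal R, (∀ x ∈ J, φ x ∈ J) → (∃ c ∈ J, Rreg c) → Ideal.span {g} ≤ J) :
    ∃ ψ : R →+ R, (∀ r x, ψ (r ^ q * x) = r * ψ x) ∧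
      ∀ J : Ideal R, (∀ x ∈ J, ψ x ∈ J) → (∃ c ∈ J, Rreg c) → J = ⊤ := by
  obtain ⟨c, hcg, hc⟩ := hreg
  have hgreg : Rreg g := hc.of_dvd (Ideal.mem_span_singleton.mp hcg)
  have hgφ : ∀ x, g ∣ φ (g * x) := fun x => Ideal.mem_span_singleton.mp
    (hcomp _ (Ideal.mul_mem_right x _ (Ideal.mem_span_singleton_self g)))
  obtain ⟨ψ, hψ, hgψ⟩ := exists_mul_map_eq_map_mul hφ hgreg.isLeftRegular hgφ
  exact ⟨ψ, hψ, fun J => eq_top_of_map_mem_of_mul_map_eq hgreg.isLeftRegular hgreg hgψ hmin⟩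

theorem exists_map_eq_one [IsLocalRing R] {ψ : R →+ R} (hψ : ∀ r x, ψ (r ^ q * x) = r * ψ x)
    (htop : ∀ J : Ideal R, (∀ x ∈ J, ψ x ∈ J) → (∃ c ∈ J, Rreg c) → J = ⊤)
    {c : R} (hc : Rreg c) (hcm : c ∈ maximalIdeal R) : ∃ u, ψ u = 1 := by
  have hsup : Ideal.span {c} ⊔ rangeIdeal ψ hψ = ⊤ :=
    htop _ (fun x _ => Ideal.mem_sup_right ⟨x, rfl⟩)
      ⟨c, Ideal.mem_sup_left (Ideal.mem_span_singleton_self c), hc⟩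
  by_contra hne
  have hrange : rangeIdeal ψ hψ ≤ maximalIdeal R := le_maximalIdeal fun h =>
    hne ((Ideal.eq_top_iff_one _).mp h)
  have hspan : Ideal.span {c} ≤ maximalIdeal R := (Ideal.span_singleton_le_iff_mem _).mpr hcm
  exact (maximalIdeal.isMaximal R).ne_top (top_le_iff.mp (hsup ▸ sup_le hspan hrange))

theorem exists_mem_minimalPrimes_le_of_forall_rreg_notMem [IsNoetherianRing R] {I : Ideal R}
    (h : ∀ c, Rreg c → c ∉ I) : ∃ P ∈ minimalPrimes R, I ≤ P := by
  refine (Ideal.subset_union_prime_finite (minimalPrimes.finite_of_isNoetherianRing R) (f := id)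
    ⊥ ⊥ fun P hP _ _ => hP.1.1).mp fun y hy => ?_
  by_contra hy'
  simp only [id, Set.mem_iUnion, SetLike.mem_coe, not_exists] at hy'
  exact h y (fun P hP => hy' P hP) hy

theorem maximalIdeal_eq_bot_of_forall_rreg_notMem [IsNoetherianRing R] [IsLocalRing R]
    [IsReduced R] (h : ∀ c, Rreg c → c ∉ maximalIdeal R) : maximalIdeal R = ⊥ := by
  obtain ⟨P, hP, hmP⟩ := exists_mem_minimalPrimes_le_of_forall_rreg_notMem h
  have hm : maximalIdeal R ∈ minimalPrimes R :=
    (le_antisymm (le_maximalIdeal hP.1.1.ne_top) hmP) ▸ hP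
  have : Ring.KrullDimLE 0 R := Ring.krullDimLE_zero_iff_forall_minimalPrimes_isMaximal.mpr
    fun Q hQ => (le_antisymm (le_maximalIdeal hQ.1.1.ne_top)
      (hm.2 ⟨hQ.1.1, bot_le⟩ (le_maximalIdeal hQ.1.1.ne_top))) ▸ maximalIdeal.isMaximal R
  exact isField_iff_maximalIdeal_eq.mp Ring.KrullDimLE.isField_of_isReduced

theorem mem_of_inTightClosure_of_forall_rreg_notMem [IsNoetherianRing R] [IsLocalRing R]
    [IsReduced R] {p : ℕ} (hp : p ≠ 0) (h : ∀ c, Rreg c → c ∉ maximalIdeal R) {I : Ideal R}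
    {x : R} (hx : InTightClosure p I x) : x ∈ I := by
  obtain ⟨c, hc, N, hN⟩ := hx
  have hxI : x ^ p ^ N ∈ I := frobeniusPower_le (pow_ne_zero N hp) I
    ((Ideal.unit_mul_mem_iff_mem _ (notMem_maximalIdeal.mp (h c hc))).mp (hN N le_rfl))
  rcases eq_or_ne I ⊤ with rfl | hI
  · exact Submodule.mem_top
  have hx0 : x ^ p ^ N = 0 := by
    simpa [maximalIdeal_eq_bot_of_forall_rreg_notMem h] using le_maximalIdeal hI hxI
  rw [IsNilpotent.eq_zero ⟨_, hx0⟩]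
  exact I.zero_mem

end

theorem weakly_F_regular_of_principal_test_ideal_general {R : Type*} [CommRing R] [IsNoetherianRing R]
    [IsLocalRing R] [IsReduced R] (p : ℕ) [Fact p.Prime]
    (e q : ℕ) (he : 1 ≤ e) (hq : q = p ^ e)
    (φ : R →+ R) (hφ : ∀ r x : R, φ (r ^ q * x) = r * φ x)
    (T : Ideal R)
    (hTcomp : ∀ x ∈ T, φ x ∈ T)
    (hTreg : ∃ c ∈ T, Rreg c)
    (hTmin : ∀ J : Ideal R, (∀ x ∈ J, φ x ∈ J) → (∃ c ∈ J, Rreg c) → T ≤ J)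
    (hprin : Submodule.IsPrincipal T) :
    ∀ I : Ideal R, tightClosure p I = I := by
  intro I
  refine le_antisymm (Ideal.span_le.mpr fun x hx => ?_) (le_tightClosure p I)
  by_cases hm : ∀ c, Rreg c → c ∉ maximalIdeal R
  · exact mem_of_inTightClosure_of_forall_rreg_notMem (Fact.out : p.Prime).ne_zero hm hx
  push Not at hm
  obtain ⟨d, hd, hdm⟩ := hm
  obtain ⟨g, rfl⟩ := hprin
  obtain ⟨ψ, hψ, htop⟩ := exists_forall_eq_top_of_span_singleton hφ hTcomp hTreg hTmin
  obtain ⟨u, hu⟩ := exists_map_eq_one hψ htop hd hdm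
  obtain ⟨c, hc, N, hN⟩ := hx
  refine mem_of_forall_mul_pow_mem hψ htop hu hc (N := N) fun k hk => ?_
  rw [hq, ← pow_mul]
  exact hN _ (hk.trans (Nat.le_mul_of_pos_left k he))

/-- If the test ideal `τ(R,φ)` (the smallest `φ`-compatible ideal meeting
`R^o`) is principal, then `R` is weakly F-regular: `I* = I` for every ideal `I`. -/
theorem weakly_F_regular_of_principal_test_ideal {R : Type*} [CommRing R] [IsNoetherianRing R]
    [IsLocalRing R] [IsReduced R] (p : ℕ) [Fact p.Prime] [CharP R p]
    (hFF : (frobenius R p).Finite)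
    (e q : ℕ) (he : 1 ≤ e) (hq : q = p ^ e)
    (φ : R →+ R) (hφ : ∀ r x : R, φ (r ^ q * x) = r * φ x)
    (T : Ideal R)
    (hTcomp : ∀ x ∈ T, φ x ∈ T)
    (hTreg : ∃ c ∈ T, Rreg c)
    (hTmin : ∀ J : Ideal R, (∀ x ∈ J, φ x ∈ J) → (∃ c ∈ J, Rreg c) → T ≤ J)
    (hprin : Submodule.IsPrincipal T) :
    ∀ I : Ideal R, tightClosure p I = I :=
  weakly_F_regular_of_principal_test_ideal_general p e q he hq φ hφ T hTcomp hTreg hTmin hprin
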